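/- The admissibility condition for the Weyl element w = s₁s₂s₁ forces the relation N₂ = M₂·(c₁²/c₂²): if the character identity ψ^{(M)}(w c* x (c*)⁻¹ w⁻¹) = ψ^{(N)}(x) holds for all x in the opposite cell Ū_w, then the character parameters satisfy N₂ c₂² = M₂ c₁². -/

import Mathlib

noncomputable section

open Matrix

abbrev M4R := Matrix (Fin 4) (Fin 4) ℝ

def nMat (x : ℝ) : M4R := !![1,x,0,0; 0,1,0,0; 0,0,1,0; 0,0,-x,1]

def sMat (a b c : ℝ) : M4R := !![1,0,a,b; 0,1,b,c; 0,0,1,0; 0,0,0,1]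

/-- A general element `n(x)·s(T)` of `U(ℝ)`. -/
def uMat (x a b c : ℝ) : M4R := nMat x * sMat a b c

/-- The unipotent radical `U(ℝ)`. -/
def Uset : Set M4R := {g | ∃ x a b c : ℝ, g = uMat x a b c}

def s1mat : M4R := !![0,1,0,0; -1,0,0,0; 0,0,0,1; 0,0,-1,0]

def s2mat : M4R := !![1,0,0,0; 0,0,0,1; 0,0,1,0; 0,-1,0,0]

/-- The torus element `c* = t(1/c₁, c₁/c₂)`. -/
def cstar (c₁ c₂ : ℝ) : M4R :=
  Matrix.diagonal ![c₁⁻¹, c₁ / c₂, c₁, c₂ / c₁]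

/-- The character `ψ^{(X)}` of `U(ℝ)` read off from the matrix entries: for
`u = n(x)s([[a,b],[b,c]])` one has `u 0 1 = x` and `u 1 3 = c`, so
`ψ^{(X)}(u) = e(X₁·x + X₂·c)`. -/
def psiChar (X₁ X₂ : ℝ) (g : M4R) : ℂ :=
  Complex.exp (2 * Real.pi * Complex.I * ((X₁ * g 0 1 + X₂ * g 1 3 : ℝ) : ℂ))

/-- The opposite cell `Ū_w = w⁻¹ U w ∩ U`. -/
def UbarSet (w : M4R) : Set M4R := {g | g ∈ Uset ∧ w * g * w⁻¹ ∈ Uset}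

set_option maxHeartbeats 1000000 in
/-- Admissibility for `w = s₁s₂s₁` forces `N₂·c₂² = M₂·c₁²`: if
`ψ^{(M)}(w c* x (c*)⁻¹ w⁻¹) = ψ^{(N)}(x)` for all `x ∈ Ū_w(ℝ)`, then
`N₂ c₂² = M₂ c₁²`. -/
theorem stmt_12 (c₁ c₂ : ℕ) (hc₁ : 0 < c₁) (hc₂ : 0 < c₂) (M₁ M₂ N₁ N₂ : ℝ)
    (h : ∀ g ∈ UbarSet (s1mat * s2mat * s1mat),
      psiChar M₁ M₂ ((s1mat * s2mat * s1mat * cstar c₁ c₂) * g *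
        (s1mat * s2mat * s1mat * cstar c₁ c₂)⁻¹) = psiChar N₁ N₂ g) :
    N₂ * (c₂ : ℝ) ^ 2 = M₂ * (c₁ : ℝ) ^ 2 := by
  have hc1 : (c₁ : ℝ) ≠ 0 := Nat.cast_ne_zero.mpr hc₁.ne'
  have hc2 : (c₂ : ℝ) ≠ 0 := Nat.cast_ne_zero.mpr hc₂.ne'
  have hcs : cstar (c₁ : ℝ) (c₂ : ℝ) =
      (!![(c₁:ℝ)⁻¹,0,0,0; 0,(c₁:ℝ)/c₂,0,0; 0,0,(c₁:ℝ),0; 0,0,0,(c₂:ℝ)/c₁] : M4R) := by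
    ext i j
    fin_cases i <;> fin_cases j <;>
      simp [cstar, Matrix.diagonal_apply, Matrix.vecHead, Matrix.vecTail]
  -- the Weyl element and its inverse
  have hw : s1mat * s2mat * s1mat =
      (!![0,0,-1,0; 0,-1,0,0; 1,0,0,0; 0,0,0,-1] : M4R) := by
    ext i j
    fin_cases i <;> fin_cases j <;>
      simp [s1mat, s2mat, Matrix.mul_apply, Fin.sum_univ_four,
        Matrix.vecHead, Matrix.vecTail]
  have hwinv : (s1mat * s2mat * s1mat)⁻¹ =
      (!![0,0,1,0; 0,-1,0,0; -1,0,0,0; 0,0,0,-1] : M4R) := by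
    apply Matrix.inv_eq_right_inv
    rw [hw]
    ext i j
    fin_cases i <;> fin_cases j <;>
      simp [Matrix.mul_apply, Fin.sum_univ_four, Matrix.one_apply,
        Matrix.vecHead, Matrix.vecTail]
  -- inverse of A = w * cstar
  have hAinv : (s1mat * s2mat * s1mat * cstar c₁ c₂)⁻¹ =
      (!![0,0,(c₁:ℝ),0; 0,-(c₂:ℝ)/c₁,0,0; -(1:ℝ)/c₁,0,0,0; 0,0,0,-(c₁:ℝ)/c₂] : M4R) := by
    apply Matrix.inv_eq_right_inv
    rw [hw, hcs, Matrix.mul_assoc]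
    ext i j
    fin_cases i <;> fin_cases j <;>
      · simp [Matrix.mul_apply, Fin.sum_univ_four, Matrix.one_apply,
          Matrix.vecHead, Matrix.vecTail]
        try field_simp
        try ring
  have key : ∀ c : ℝ,
      Complex.exp (2 * Real.pi * Complex.I *
          ((M₁ * 0 + M₂ * ((c₁:ℝ)^2 * c / (c₂:ℝ)^2) : ℝ) : ℂ)) =
      Complex.exp (2 * Real.pi * Complex.I * ((N₁ * 0 + N₂ * c : ℝ) : ℂ)) := by
    intro c
    have hgE : uMat 0 0 0 c = (!![1,0,0,0; 0,1,0,c; 0,0,1,0; 0,0,0,1] : M4R) := by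
      ext i j
      fin_cases i <;> fin_cases j <;>
        simp [uMat, nMat, sMat, Matrix.mul_apply, Fin.sum_univ_four,
          Matrix.vecHead, Matrix.vecTail]
    have hmem : uMat 0 0 0 c ∈ UbarSet (s1mat * s2mat * s1mat) := by
      refine ⟨⟨0, 0, 0, c, rfl⟩, ?_⟩
      have : s1mat * s2mat * s1mat * uMat 0 0 0 c * (s1mat * s2mat * s1mat)⁻¹ =
          uMat 0 0 0 c := by
        rw [hwinv, hw, hgE]
        ext i j
        fin_cases i <;> fin_cases j <;>
          simp [Matrix.mul_apply, Fin.sum_univ_four, Matrix.vecHead, Matrix.vecTail]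
      rw [this]
      exact ⟨0, 0, 0, c, rfl⟩
    have hconj : (s1mat * s2mat * s1mat * cstar c₁ c₂) * uMat 0 0 0 c *
        (s1mat * s2mat * s1mat * cstar c₁ c₂)⁻¹ =
        (!![1,0,0,0; 0,1,0,(c₁:ℝ)^2 * c / (c₂:ℝ)^2; 0,0,1,0; 0,0,0,1] : M4R) := by
      rw [hAinv, hw, hcs, hgE]
      ext i j
      fin_cases i <;> fin_cases j <;>
        · simp [Matrix.mul_apply, Fin.sum_univ_four, Matrix.vecHead, Matrix.vecTail]
          try field_simp
          try ring
    have := h _ hmem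
    rw [hconj, hgE] at this
    simpa [psiChar, Matrix.vecHead, Matrix.vecTail] using this
  -- deduce the parameter relation
  have hab : M₂ * (c₁:ℝ)^2 / (c₂:ℝ)^2 = N₂ := by
    by_contra hne
    set α : ℝ := M₂ * (c₁:ℝ)^2 / (c₂:ℝ)^2 with hα
    set c : ℝ := (2 * (α - N₂))⁻¹ with hc
    have hd : α - N₂ ≠ 0 := sub_ne_zero.mpr hne
    have h1 := key c
    rw [Complex.exp_eq_exp_iff_exists_int] at h1
    obtain ⟨n, hn⟩ := h1
    have hx : M₁ * 0 + M₂ * ((c₁:ℝ)^2 * c / (c₂:ℝ)^2) = α * c := by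
      rw [hα]; ring
    have hy : N₁ * 0 + N₂ * c = N₂ * c := by ring
    rw [hx, hy] at hn
    have hfac : (2 * (Real.pi : ℂ) * Complex.I) *
        (((α * c : ℝ) : ℂ) - ((N₂ * c : ℝ) : ℂ) - (n : ℂ)) = 0 := by
      linear_combination hn
    have hpi : (Real.pi : ℂ) ≠ 0 := Complex.ofReal_ne_zero.mpr Real.pi_ne_zero
    have h2 : ((α * c : ℝ) : ℂ) - ((N₂ * c : ℝ) : ℂ) - (n : ℂ) = 0 := by
      rcases mul_eq_zero.mp hfac with h' | h'
      · exact absurd h' (by simp [hpi, Complex.I_ne_zero])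
      · exact h'
    have h3 : α * c - N₂ * c - (n : ℝ) = 0 := by
      exact_mod_cast h2
    have h4 : α * c - N₂ * c = 1 / 2 := by
      rw [hc]
      field_simp
    rw [h4] at h3
    have h5 : (2 * n : ℤ) = 1 := by
      have : ((2 * n : ℤ) : ℝ) = 1 := by push_cast; linarith
      exact_mod_cast this
    omega
  field_simp at hab ⊢
  linarith [hab]
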